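/- arXiv:1907.03369 — 2 statements merged into one kernel-verified Lean document; each statement's English description precedes it below -/
import Mathlib

section
/- Let G be a finite abstract simplicial complex with connection matrix L, regarded as a matrix over the rationals, and let g = L^{-1}. Then the super trace of g equals the Euler characteristic: ∑_{x∈G} ω(x)·g(x,x) = χ(G) (a McKean–Singer type formula for the connection Laplacian). -/
open Finset BigOperators

variable {α : Type*} [DecidableEq α]

/-- A finite abstract simplicial complex: a finite collection of nonempty finite
sets closed under taking nonempty subsets. -/
def IsComplex (G : Finset (Finset α)) : Prop :=
  (∀ x ∈ G, x.Nonempty) ∧ ∀ x ∈ G, ∀ y : Finset α, y.Nonempty → y ⊆ x → y ∈ G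

/-- ω(x) = (-1)^(|x|-1). -/
def omegaS (x : Finset α) : ℤ := (-1) ^ (x.card - 1)

/-- Euler characteristic χ(G) = ∑_{x∈G} ω(x). -/
def chi (G : Finset (Finset α)) : ℤ := ∑ x ∈ G, omegaS x

/-- The connection matrix over ℚ: L(x,y)=1 if x and y intersect, 0 otherwise. -/
def connL (G : Finset (Finset α)) : Matrix G G ℚ :=
  fun x y => if (x.1 ∩ y.1).Nonempty then 1 else 0

/- ### Auxiliary lemmas -/

lemma powQ (z : Finset α) :
    ∑ m ∈ z.powerset, (-1 : ℚ) ^ m.card = if z = ∅ then 1 else 0 := by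
  have := Finset.sum_powerset_neg_one_pow_card (x := z)
  have h2 : ((∑ m ∈ z.powerset, (-1 : ℤ) ^ m.card : ℤ) : ℚ)
      = ∑ m ∈ z.powerset, (-1 : ℚ) ^ m.card := by push_cast; rfl
  rw [← h2, this]; split <;> norm_num

lemma omega_nonempty {x : Finset α} (hx : x.Nonempty) :
    ((omegaS x : ℤ) : ℚ) = -(-1 : ℚ) ^ x.card := by
  obtain ⟨n, hn⟩ : ∃ n, x.card = n + 1 :=
    ⟨x.card - 1, (Nat.succ_pred_eq_of_pos (Finset.card_pos.mpr hx)).symm⟩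
  rw [omegaS]
  push_cast
  rw [hn, Nat.add_sub_cancel, pow_succ]
  ring

lemma omega_sq (x : Finset α) : ((omegaS x : ℤ) : ℚ) * ((omegaS x : ℤ) : ℚ) = 1 := by
  rw [omegaS]; push_cast
  rw [← mul_pow]; norm_num

/-- Sum of ω over all nonempty subsets of a nonempty set is 1. -/
lemma sumA {z : Finset α} (hz : z.Nonempty) :
    ∑ u ∈ z.powerset.filter (fun u => u.Nonempty),
      ((omegaS u : ℤ) : ℚ) = 1 := by
  have h1 : ∑ u ∈ z.powerset.filter (fun u => u.Nonempty), ((omegaS u : ℤ) : ℚ)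
      = ∑ u ∈ z.powerset.filter (fun u => u.Nonempty), -(-1 : ℚ) ^ u.card := by
    refine Finset.sum_congr rfl fun u hu => ?_
    exact omega_nonempty (Finset.mem_filter.mp hu).2
  have h2 : ∑ u ∈ z.powerset.filter (fun u => ¬ u.Nonempty), -(-1 : ℚ) ^ u.card = -1 := by
    have : z.powerset.filter (fun u => ¬ u.Nonempty) = {∅} := by
      ext u
      simp [Finset.mem_filter, Finset.not_nonempty_iff_eq_empty]
      intro h; subst h; exact Finset.empty_subset z
    rw [this]; simp
  have h3 := Finset.sum_filter_add_sum_filter_not z.powerset (fun u => u.Nonempty)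
      (fun u => -(-1 : ℚ) ^ u.card)
  have h4 : ∑ u ∈ z.powerset, -(-1 : ℚ) ^ u.card = 0 := by
    rw [Finset.sum_neg_distrib, powQ, if_neg (Finset.nonempty_iff_ne_empty.mp hz), neg_zero]
  rw [h1]
  linarith [h3, h2, h4]

/-- Inclusion–exclusion: the ω-sum over nonempty subsets of z meeting x. -/
lemma sumB {z : Finset α} (hz : z.Nonempty) (x : Finset α) :
    ∑ u ∈ z.powerset.filter (fun u => u.Nonempty ∧ (u ∩ x).Nonempty),
      ((omegaS u : ℤ) : ℚ) = if z ⊆ x then 1 else 0 := by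
  have hsplit := Finset.sum_filter_add_sum_filter_not (z.powerset.filter (fun u => u.Nonempty))
      (fun u => (u ∩ x).Nonempty) (fun u => ((omegaS u : ℤ) : ℚ))
  have hfe : (z.powerset.filter (fun u => u.Nonempty)).filter (fun u => (u ∩ x).Nonempty)
      = z.powerset.filter (fun u => u.Nonempty ∧ (u ∩ x).Nonempty) := by
    rw [Finset.filter_filter]
  have hfd : (z.powerset.filter (fun u => u.Nonempty)).filter (fun u => ¬(u ∩ x).Nonempty)
      = (z \ x).powerset.filter (fun u => u.Nonempty) := by
    ext u
    simp only [Finset.mem_filter, Finset.mem_powerset, Finset.not_nonempty_iff_eq_empty,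
      Finset.subset_sdiff]
    constructor
    · rintro ⟨⟨h1, h2⟩, h3⟩
      exact ⟨⟨h1, Finset.disjoint_left.mpr (fun a ha hax =>
        Finset.notMem_empty a (h3 ▸ Finset.mem_inter.mpr ⟨ha, hax⟩))⟩, h2⟩
    · rintro ⟨⟨h1, h2⟩, h3⟩
      refine ⟨⟨h1, h3⟩, ?_⟩
      rw [← Finset.disjoint_iff_inter_eq_empty]
      exact h2
  rw [hfe] at hsplit
  rw [hfd] at hsplit
  have hA := sumA hz
  by_cases hzx : z ⊆ x
  · have : z \ x = ∅ := Finset.sdiff_eq_empty_iff_subset.mpr hzx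
    rw [this] at hsplit
    simp only [Finset.powerset_empty] at hsplit
    have : ({∅} : Finset (Finset α)).filter (fun u => u.Nonempty) = ∅ := by
      simp [Finset.filter_singleton]
    rw [this, Finset.sum_empty] at hsplit
    rw [if_pos hzx]
    linarith [hsplit, hA]
  · have hne : (z \ x).Nonempty := by
      rw [Finset.sdiff_nonempty]; exact hzx
    have hB := sumA hne
    rw [if_neg hzx]
    linarith [hsplit, hA, hB]

/-- Interval sum: ∑_{y ⊆ z ⊆ x} (-1)^|z| = [x = y]·(-1)^|x|. -/
lemma sumC {y x : Finset α} (hyx : y ⊆ x) :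
    ∑ z ∈ x.powerset.filter (fun z => y ⊆ z), (-1 : ℚ) ^ z.card
      = if x = y then (-1 : ℚ) ^ x.card else 0 := by
  have key : ∑ z ∈ x.powerset.filter (fun z => y ⊆ z), (-1 : ℚ) ^ z.card
      = ∑ w ∈ (x \ y).powerset, (-1 : ℚ) ^ (w.card + y.card) := by
    refine Finset.sum_bij' (fun z _ => z \ y) (fun w _ => w ∪ y) ?_ ?_ ?_ ?_ ?_
    · intro z hz
      simp only [Finset.mem_filter, Finset.mem_powerset] at hz
      simp only [Finset.mem_powerset]
      exact Finset.sdiff_subset_sdiff hz.1 (le_refl y)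
    · intro w hw
      simp only [Finset.mem_powerset] at hw
      simp only [Finset.mem_filter, Finset.mem_powerset]
      exact ⟨Finset.union_subset (hw.trans (Finset.sdiff_subset)) hyx, Finset.subset_union_right⟩
    · intro z hz
      simp only [Finset.mem_filter, Finset.mem_powerset] at hz
      exact Finset.sdiff_union_of_subset hz.2
    · intro w hw
      simp only [Finset.mem_powerset] at hw
      have hd : Disjoint w y := Finset.disjoint_of_subset_left hw Finset.sdiff_disjoint
      show (w ∪ y) \ y = w
      rw [Finset.union_sdiff_right, Finset.sdiff_eq_self_of_disjoint hd]
    · intro z hz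
      simp only [Finset.mem_filter, Finset.mem_powerset] at hz
      show (-1 : ℚ) ^ z.card = (-1 : ℚ) ^ ((z \ y).card + y.card)
      congr 1
      rw [Finset.card_sdiff_of_subset hz.2]
      have := Finset.card_le_card hz.2
      omega
  rw [key]
  have : ∑ w ∈ (x \ y).powerset, (-1 : ℚ) ^ (w.card + y.card)
      = (∑ w ∈ (x \ y).powerset, (-1 : ℚ) ^ w.card) * (-1 : ℚ) ^ y.card := by
    rw [Finset.sum_mul]
    exact Finset.sum_congr rfl fun w _ => (pow_add _ _ _)
  rw [this, powQ]
  by_cases hxy : x = y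
  · subst hxy
    simp
  · have : x \ y ≠ ∅ := by
      rw [Ne, Finset.sdiff_eq_empty_iff_subset]
      intro h
      exact hxy (Finset.Subset.antisymm h hyx)
    rw [if_neg this, if_neg hxy, zero_mul]

/-- The Green's function matrix: g(x,y) = ω(x)ω(y)·χ(W⁺(x) ∩ W⁺(y)). -/
def greenM (G : Finset (Finset α)) : Matrix G G ℚ :=
  fun x y => ((omegaS x.1 : ℤ) : ℚ) * ((omegaS y.1 : ℤ) : ℚ) *
    ∑ z ∈ G.filter (fun z => x.1 ⊆ z ∧ y.1 ⊆ z), ((omegaS z : ℤ) : ℚ)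

lemma green_right_inv (G : Finset (Finset α)) (hG : IsComplex G) :
    connL G * greenM G = 1 := by
  obtain ⟨hne, hclosed⟩ := hG
  ext x y
  rw [Matrix.mul_apply]
  -- turn the subtype sum into a sum over G
  have hrw : ∀ u : G, connL G x u * greenM G u y
      = ∑ z ∈ G, (if (x.1 ∩ u.1).Nonempty then 1 else 0) * ((omegaS u.1 : ℤ) : ℚ)
          * ((omegaS y.1 : ℤ) : ℚ)
          * ((if u.1 ⊆ z ∧ y.1 ⊆ z then ((omegaS z : ℤ) : ℚ) else 0)) := by
    intro u
    rw [connL, greenM]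
    simp only [Finset.sum_filter]
    rw [Finset.mul_sum, Finset.mul_sum]
    refine Finset.sum_congr rfl fun z _ => by ring
  have step1 : (∑ u : G, connL G x u * greenM G u y)
      = ∑ u ∈ G, ∑ z ∈ G, (if (x.1 ∩ u).Nonempty then 1 else 0) * ((omegaS u : ℤ) : ℚ)
          * ((omegaS y.1 : ℤ) : ℚ)
          * ((if u ⊆ z ∧ y.1 ⊆ z then ((omegaS z : ℤ) : ℚ) else 0)) := by
    rw [← Finset.sum_coe_sort G]
    exact Finset.sum_congr rfl fun u _ => hrw u
  rw [step1, Finset.sum_comm]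
  -- inner sum over u, for fixed z
  have inner : ∀ z ∈ G, ∑ u ∈ G, (if (x.1 ∩ u).Nonempty then 1 else 0) * ((omegaS u : ℤ) : ℚ)
          * ((omegaS y.1 : ℤ) : ℚ)
          * ((if u ⊆ z ∧ y.1 ⊆ z then ((omegaS z : ℤ) : ℚ) else 0))
      = (if y.1 ⊆ z then ((omegaS z : ℤ) : ℚ) else 0) * ((omegaS y.1 : ℤ) : ℚ)
          * (if z ⊆ x.1 then 1 else 0) := by
    intro z hz
    have hset : G.filter (fun u => u.Nonempty ∧ (u ∩ x.1).Nonempty ∧ u ⊆ z)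
        = z.powerset.filter (fun u => u.Nonempty ∧ (u ∩ x.1).Nonempty) := by
      ext u
      simp only [Finset.mem_filter, Finset.mem_powerset]
      constructor
      · rintro ⟨hu, h1, h2, h3⟩; exact ⟨h3, h1, h2⟩
      · rintro ⟨h3, h1, h2⟩; exact ⟨hclosed z hz u h1 h3, h1, h2, h3⟩
    by_cases hyz : y.1 ⊆ z
    · have : ∑ u ∈ G, (if (x.1 ∩ u).Nonempty then 1 else 0) * ((omegaS u : ℤ) : ℚ)
          * ((omegaS y.1 : ℤ) : ℚ)
          * ((if u ⊆ z ∧ y.1 ⊆ z then ((omegaS z : ℤ) : ℚ) else 0))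
        = ((omegaS z : ℤ) : ℚ) * ((omegaS y.1 : ℤ) : ℚ) *
            ∑ u ∈ G.filter (fun u => u.Nonempty ∧ (u ∩ x.1).Nonempty ∧ u ⊆ z),
              ((omegaS u : ℤ) : ℚ) := by
        rw [Finset.mul_sum, Finset.sum_filter]
        refine Finset.sum_congr rfl fun u hu => ?_
        have hu' : u.Nonempty := hne u hu
        by_cases h1 : (u ∩ x.1).Nonempty
        · have h1x : (x.1 ∩ u).Nonempty := by rw [Finset.inter_comm]; exact h1
          by_cases h2 : u ⊆ z
          · simp only [if_pos h1, if_pos h1x, if_pos (And.intro h2 hyz),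
              if_pos (And.intro hu' (And.intro h1 h2))]
            ring
          · simp only [if_pos h1x, if_neg (fun h : u ⊆ z ∧ y.1 ⊆ z => h2 h.1),
              if_neg (fun h : u.Nonempty ∧ (u ∩ x.1).Nonempty ∧ u ⊆ z => h2 h.2.2)]
            ring
        · have h1' : ¬ (x.1 ∩ u).Nonempty := by rwa [Finset.inter_comm]
          simp only [if_neg h1', if_neg (fun h : u.Nonempty ∧ (u ∩ x.1).Nonempty ∧ u ⊆ z => h1 h.2.1)]
          ring
      rw [this, hset, sumB (hne z hz) x.1, if_pos hyz]
    · have : ∑ u ∈ G, (if (x.1 ∩ u).Nonempty then 1 else 0) * ((omegaS u : ℤ) : ℚ)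
          * ((omegaS y.1 : ℤ) : ℚ)
          * ((if u ⊆ z ∧ y.1 ⊆ z then ((omegaS z : ℤ) : ℚ) else 0)) = 0 := by
        refine Finset.sum_eq_zero fun u _ => ?_
        have hno : ¬ (u ⊆ z ∧ y.1 ⊆ z) := fun h => hyz h.2
        rw [if_neg hno]
        ring
      rw [this, if_neg hyz]
      ring
  rw [Finset.sum_congr rfl inner]
  -- now sum over z of [y ⊆ z]·ω(z)·ω(y)·[z ⊆ x]
  have step2 : ∑ z ∈ G, (if y.1 ⊆ z then ((omegaS z : ℤ) : ℚ) else 0)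
        * ((omegaS y.1 : ℤ) : ℚ) * (if z ⊆ x.1 then 1 else 0)
      = ((omegaS y.1 : ℤ) : ℚ) *
        ∑ z ∈ G.filter (fun z => y.1 ⊆ z ∧ z ⊆ x.1), ((omegaS z : ℤ) : ℚ) := by
    rw [Finset.mul_sum, Finset.sum_filter]
    refine Finset.sum_congr rfl fun z _ => ?_
    by_cases h1 : y.1 ⊆ z <;> by_cases h2 : z ⊆ x.1 <;> simp [h1, h2] <;> ring
  rw [step2]
  have hyne : y.1.Nonempty := hne y.1 y.2
  by_cases hyx : y.1 ⊆ x.1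
  · have hsetz : G.filter (fun z => y.1 ⊆ z ∧ z ⊆ x.1)
        = x.1.powerset.filter (fun z => y.1 ⊆ z) := by
      ext z
      simp only [Finset.mem_filter, Finset.mem_powerset]
      constructor
      · rintro ⟨_, h1, h2⟩; exact ⟨h2, h1⟩
      · rintro ⟨h2, h1⟩
        exact ⟨hclosed x.1 x.2 z (hyne.mono h1) h2, h1, h2⟩
    rw [hsetz]
    have homega : ∑ z ∈ x.1.powerset.filter (fun z => y.1 ⊆ z), ((omegaS z : ℤ) : ℚ)
        = -∑ z ∈ x.1.powerset.filter (fun z => y.1 ⊆ z), (-1 : ℚ) ^ z.card := by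
      rw [← Finset.sum_neg_distrib]
      refine Finset.sum_congr rfl fun z hz => ?_
      have : y.1 ⊆ z := (Finset.mem_filter.mp hz).2
      exact omega_nonempty (hyne.mono this)
    rw [homega, sumC hyx]
    by_cases hxy : x.1 = y.1
    · have hx_eq : x = y := Subtype.ext hxy
      rw [if_pos hxy, hx_eq, Matrix.one_apply_eq, ← omega_nonempty hyne]
      exact omega_sq y.1
    · have : x ≠ y := fun h => hxy (congrArg Subtype.val h)
      rw [if_neg hxy, Matrix.one_apply_ne this]
      ring
  · have : G.filter (fun z => y.1 ⊆ z ∧ z ⊆ x.1) = ∅ := by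
      refine Finset.filter_eq_empty_iff.mpr fun z _ h => hyx (h.1.trans h.2)
    rw [this, Finset.sum_empty, mul_zero]
    have : x ≠ y := by
      intro h; subst h; exact hyx (le_refl x.1)
    rw [Matrix.one_apply_ne this]

/-- McKean–Singer formula for the connection Laplacian: the super trace of
g = L⁻¹ equals the Euler characteristic, str(L⁻¹) = ∑_x ω(x)·g(x,x) = χ(G). -/
theorem mckean_singer (G : Finset (Finset α)) (hG : IsComplex G) :
    ∑ x : G, (omegaS x.1 : ℚ) * (connL G)⁻¹ x x = (chi G : ℚ) := by
  obtain ⟨hne, hclosed⟩ := hG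
  rw [Matrix.inv_eq_right_inv (green_right_inv G ⟨hne, hclosed⟩)]
  have hcoe : ∑ x : G, (omegaS x.1 : ℚ) * greenM G x x
      = ∑ x ∈ G, ((omegaS x : ℤ) : ℚ) * (((omegaS x : ℤ) : ℚ) * ((omegaS x : ℤ) : ℚ) *
          ∑ z ∈ G.filter (fun z => x ⊆ z ∧ x ⊆ z), ((omegaS z : ℤ) : ℚ)) :=
    Finset.sum_coe_sort G (fun u => ((omegaS u : ℤ) : ℚ) * (((omegaS u : ℤ) : ℚ) *
      ((omegaS u : ℤ) : ℚ) * ∑ z ∈ G.filter (fun z => u ⊆ z ∧ u ⊆ z), ((omegaS z : ℤ) : ℚ)))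
  rw [hcoe]
  have step1 : ∑ x ∈ G, ((omegaS x : ℤ) : ℚ) * (((omegaS x : ℤ) : ℚ) * ((omegaS x : ℤ) : ℚ) *
          ∑ z ∈ G.filter (fun z => x ⊆ z ∧ x ⊆ z), ((omegaS z : ℤ) : ℚ))
      = ∑ x ∈ G, ∑ z ∈ G, (if x ⊆ z then ((omegaS x : ℤ) : ℚ) * ((omegaS z : ℤ) : ℚ) else 0) := by
    refine Finset.sum_congr rfl fun x hx => ?_
    rw [omega_sq, one_mul, Finset.mul_sum, Finset.sum_filter]
    refine Finset.sum_congr rfl fun z hz => ?_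
    by_cases h : x ⊆ z <;> simp [h]
  rw [step1, Finset.sum_comm]
  have step2 : ∀ z ∈ G, ∑ x ∈ G, (if x ⊆ z then ((omegaS x : ℤ) : ℚ) * ((omegaS z : ℤ) : ℚ) else 0)
      = ((omegaS z : ℤ) : ℚ) := by
    intro z hz
    have hset : G.filter (fun x => x ⊆ z) = z.powerset.filter (fun u => u.Nonempty) := by
      ext u
      simp only [Finset.mem_filter, Finset.mem_powerset]
      constructor
      · rintro ⟨hu, h1⟩; exact ⟨h1, hne u hu⟩
      · rintro ⟨h1, h2⟩; exact ⟨hclosed z hz u h2 h1, h1⟩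
    rw [← Finset.sum_filter, hset, ← Finset.sum_mul, sumA (hne z hz), one_mul]
  rw [Finset.sum_congr rfl step2, chi]
  push_cast
  rfl
end

section
/- Let G be a finite abstract simplicial complex with connection matrix L, regarded as a matrix over the rationals, and let g = L^{-1}. Then for every x ∈ G, the total potential at x equals the sphere curvature: ∑_{y∈G} g(x,y) = ω(x)·g(x,x). -/
open Finset BigOperators

variable {α : Type*} [DecidableEq α]

/-- rational weight -/
def wq (s : Finset α) : ℚ := (-1) ^ (s.card - 1)

lemma wq_sq (s : Finset α) : wq s * wq s = 1 := by
  unfold wq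
  rw [← pow_add]
  exact Even.neg_one_pow ⟨s.card - 1, rfl⟩

/-- candidate Green function -/
def gmat (G : Finset (Finset α)) : Matrix G G ℚ :=
  fun x y => wq x.1 * wq y.1 *
    ∑ z ∈ G.filter (fun z => x.1 ⊆ z ∧ y.1 ⊆ z), wq z

lemma sum_powerset_q (s : Finset α) :
    (∑ m ∈ s.powerset, ((-1 : ℚ)) ^ m.card) = if s = ∅ then 1 else 0 := by
  have := @Finset.sum_powerset_neg_one_pow_card α _ s
  exact_mod_cast congrArg (Int.cast : ℤ → ℚ) this

lemma sumT (s : Finset α) :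
    ∑ y ∈ s.powerset.filter (fun y => y.Nonempty), wq y
      = if s.Nonempty then 1 else 0 := by
  have hsplit := Finset.sum_filter_add_sum_filter_not s.powerset
    (fun y => y.Nonempty) (fun y => ((-1 : ℚ)) ^ y.card)
  have hnot : ∑ y ∈ s.powerset.filter (fun y => ¬ y.Nonempty), ((-1 : ℚ)) ^ y.card = 1 := by
    have : s.powerset.filter (fun y => ¬ y.Nonempty) = {∅} := by
      ext y
      simp only [Finset.mem_filter, Finset.mem_powerset, Finset.not_nonempty_iff_eq_empty,
        Finset.mem_singleton]
      constructor
      · exact fun h => h.2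
      · rintro rfl; exact ⟨Finset.empty_subset s, rfl⟩
    rw [this]; simp
  have hval : ∑ y ∈ s.powerset.filter (fun y => y.Nonempty), ((-1 : ℚ)) ^ y.card
      = (if s = ∅ then 1 else 0) - 1 := by
    rw [← sum_powerset_q s, ← hsplit, hnot]; ring
  have hneg : ∑ y ∈ s.powerset.filter (fun y => y.Nonempty), wq y
      = - ∑ y ∈ s.powerset.filter (fun y => y.Nonempty), ((-1 : ℚ)) ^ y.card := by
    rw [← Finset.sum_neg_distrib]
    refine Finset.sum_congr rfl fun y hy => ?_
    have hy' : y.Nonempty := (Finset.mem_filter.mp hy).2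
    have hc : y.card - 1 + 1 = y.card := Nat.succ_pred_eq_of_pos (Finset.card_pos.mpr hy')
    unfold wq
    rw [show ((-1 : ℚ)) ^ y.card = (-1) ^ (y.card - 1) * (-1) by rw [← pow_succ, hc]]
    ring
  rw [hneg, hval]
  by_cases hs : s.Nonempty
  · rw [if_pos hs, if_neg (Finset.nonempty_iff_ne_empty.mp hs)]; ring
  · rw [if_neg hs, if_pos (Finset.not_nonempty_iff_eq_empty.mp hs)]; ring

lemma mySumInner (G : Finset (Finset α)) (hG : IsComplex G) {z : Finset α} (hz : z ∈ G)
    (x : Finset α) :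
    ∑ y ∈ G.filter (fun y => y ⊆ z ∧ (y ∩ x).Nonempty), wq y
      = if z ⊆ x then 1 else 0 := by
  have hset : G.filter (fun y => y ⊆ z ∧ (y ∩ x).Nonempty)
      = (z.powerset.filter (fun y => y.Nonempty)).filter (fun y => (y ∩ x).Nonempty) := by
    ext y
    simp only [Finset.mem_filter, Finset.mem_powerset]
    constructor
    · rintro ⟨hyG, hyz, hyx⟩
      exact ⟨⟨hyz, hG.1 y hyG⟩, hyx⟩
    · rintro ⟨⟨hyz, hyne⟩, hyx⟩
      exact ⟨hG.2 z hz y hyne hyz, hyz, hyx⟩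
  rw [hset]
  have hsplit := Finset.sum_filter_add_sum_filter_not (z.powerset.filter (fun y => y.Nonempty))
    (fun y => (y ∩ x).Nonempty) wq
  have hnot : (z.powerset.filter (fun y => y.Nonempty)).filter (fun y => ¬ (y ∩ x).Nonempty)
      = (z \ x).powerset.filter (fun y => y.Nonempty) := by
    ext y
    simp only [Finset.mem_filter, Finset.mem_powerset, Finset.not_nonempty_iff_eq_empty]
    constructor
    · rintro ⟨⟨hyz, hyne⟩, hint⟩
      refine ⟨fun a ha => Finset.mem_sdiff.mpr ⟨hyz ha, fun hax => ?_⟩, hyne⟩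
      exact Finset.notMem_empty a (hint ▸ Finset.mem_inter.mpr ⟨ha, hax⟩)
    · rintro ⟨hyzx, hyne⟩
      refine ⟨⟨fun a ha => (Finset.mem_sdiff.mp (hyzx ha)).1, hyne⟩, ?_⟩
      apply Finset.eq_empty_of_forall_notMem
      intro a ha
      rcases Finset.mem_inter.mp ha with ⟨hay, hax⟩
      exact (Finset.mem_sdiff.mp (hyzx hay)).2 hax
  have h1 := sumT z
  have h2 := sumT (z \ x)
  rw [hnot, h2] at hsplit
  rw [if_pos (hG.1 z hz)] at h1
  have key : ∑ y ∈ (z.powerset.filter (fun y => y.Nonempty)).filter (fun y => (y ∩ x).Nonempty), wq y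
      = 1 - (if (z \ x).Nonempty then 1 else 0) := by
    linarith [hsplit, h1]
  rw [key]
  by_cases hzx : z ⊆ x
  · rw [if_pos hzx, if_neg]
    · ring
    · rw [Finset.sdiff_nonempty]; exact fun h => h hzx
  · rw [if_neg hzx, if_pos (Finset.sdiff_nonempty.mpr hzx)]; ring

lemma between_sum (u x : Finset α) (hu : u.Nonempty) (hux : u ⊆ x) :
    ∑ z ∈ x.powerset.filter (fun z => u ⊆ z), wq z
      = if x = u then wq u else 0 := by
  have hbij : ∑ z ∈ x.powerset.filter (fun z => u ⊆ z), wq z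
      = ∑ s ∈ (x \ u).powerset, wq (s ∪ u) := by
    refine Finset.sum_nbij' (fun z => z \ u) (fun s => s ∪ u) ?_ ?_ ?_ ?_ ?_
    · intro z hz
      rcases Finset.mem_filter.mp hz with ⟨hzx, huz⟩
      rw [Finset.mem_powerset] at hzx ⊢
      exact Finset.sdiff_subset_sdiff hzx le_rfl
    · intro s hs
      rw [Finset.mem_powerset] at hs
      refine Finset.mem_filter.mpr ⟨Finset.mem_powerset.mpr ?_, Finset.subset_union_right⟩
      exact Finset.union_subset (hs.trans (Finset.sdiff_subset)) hux
    · intro z hz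
      rcases Finset.mem_filter.mp hz with ⟨_, huz⟩
      exact Finset.sdiff_union_of_subset huz
    · intro s hs
      rw [Finset.mem_powerset] at hs
      show (s ∪ u) \ u = s
      rw [Finset.union_sdiff_right]
      exact Finset.sdiff_eq_self_of_disjoint (Finset.disjoint_left.mpr
        fun a ha hau => (Finset.mem_sdiff.mp (hs ha)).2 hau)
    · intro z hz
      rcases Finset.mem_filter.mp hz with ⟨_, huz⟩
      show wq z = wq (z \ u ∪ u)
      rw [Finset.sdiff_union_of_subset huz]
  rw [hbij]
  have hcard : ∀ s ∈ (x \ u).powerset, wq (s ∪ u) = (-1 : ℚ) ^ s.card * wq u := by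
    intro s hs
    rw [Finset.mem_powerset] at hs
    have hdisj : Disjoint s u := Finset.disjoint_left.mpr
      fun a ha hau => (Finset.mem_sdiff.mp (hs ha)).2 hau
    have hc : (s ∪ u).card = s.card + u.card := Finset.card_union_of_disjoint hdisj
    have hu1 : 1 ≤ u.card := Finset.card_pos.mpr hu
    unfold wq
    rw [hc, show s.card + u.card - 1 = s.card + (u.card - 1) by omega, pow_add]
  rw [Finset.sum_congr rfl hcard, ← Finset.sum_mul, sum_powerset_q]
  have heq : x \ u = ∅ ↔ x = u := by
    rw [Finset.sdiff_eq_empty_iff_subset]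
    exact ⟨fun h => Finset.Subset.antisymm h hux, fun h => h ▸ le_rfl⟩
  by_cases hx : x = u
  · rw [if_pos (heq.mpr hx), if_pos hx, one_mul]
  · rw [if_neg (fun h => hx (heq.mp h)), if_neg hx, zero_mul]

lemma connL_mul_gmat (G : Finset (Finset α)) (hG : IsComplex G) :
    connL G * gmat G = 1 := by
  ext x u
  rw [Matrix.mul_apply]
  have step1 : ∀ y ∈ G,
      (if (x.1 ∩ y).Nonempty then (1 : ℚ) else 0) *
        (wq y * wq u.1 * ∑ z ∈ G.filter (fun z => y ⊆ z ∧ u.1 ⊆ z), wq z)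
      = ∑ z ∈ G, (if (x.1 ∩ y).Nonempty ∧ y ⊆ z ∧ u.1 ⊆ z then wq y * wq u.1 * wq z else 0) := by
    intro y _
    rw [Finset.sum_filter]
    by_cases h1 : (x.1 ∩ y).Nonempty
    · rw [if_pos h1, one_mul, Finset.mul_sum]
      refine Finset.sum_congr rfl fun z _ => ?_
      by_cases h2 : y ⊆ z ∧ u.1 ⊆ z
      · rw [if_pos h2, if_pos ⟨h1, h2⟩]
      · rw [if_neg h2, if_neg (fun h => h2 h.2), mul_zero]
    · rw [if_neg h1, zero_mul]
      symm
      exact Finset.sum_eq_zero fun z _ => if_neg (fun h => h1 h.1)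
  calc ∑ y : G, connL G x y * gmat G y u
      = ∑ y ∈ G, ∑ z ∈ G,
          (if (x.1 ∩ y).Nonempty ∧ y ⊆ z ∧ u.1 ⊆ z then wq y * wq u.1 * wq z else 0) := by
        rw [← Finset.sum_coe_sort G (fun y => ∑ z ∈ G,
          (if (x.1 ∩ y).Nonempty ∧ y ⊆ z ∧ u.1 ⊆ z then wq y * wq u.1 * wq z else 0))]
        exact Finset.sum_congr rfl fun y _ => step1 y.1 y.2
    _ = ∑ z ∈ G, ∑ y ∈ G,
          (if (x.1 ∩ y).Nonempty ∧ y ⊆ z ∧ u.1 ⊆ z then wq y * wq u.1 * wq z else 0) :=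
        Finset.sum_comm
    _ = ∑ z ∈ G, (if u.1 ⊆ z ∧ z ⊆ x.1 then wq u.1 * wq z else 0) := by
        refine Finset.sum_congr rfl fun z hz => ?_
        by_cases hu : u.1 ⊆ z
        · have hterm : ∀ y ∈ G,
              (if (x.1 ∩ y).Nonempty ∧ y ⊆ z ∧ u.1 ⊆ z then wq y * wq u.1 * wq z else 0)
              = (if y ⊆ z ∧ (y ∩ x.1).Nonempty then wq y else 0) * (wq u.1 * wq z) := by
            intro y _
            by_cases h : y ⊆ z ∧ (y ∩ x.1).Nonempty
            · rw [if_pos ⟨by rw [Finset.inter_comm]; exact h.2, h.1, hu⟩, if_pos h]; ring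
            · rw [if_neg, if_neg h, zero_mul]
              rintro ⟨hh1, hh2, _⟩
              exact h ⟨hh2, by rwa [Finset.inter_comm]⟩
          rw [Finset.sum_congr rfl hterm, ← Finset.sum_mul, ← Finset.sum_filter,
            mySumInner G hG hz x.1]
          by_cases hzx : z ⊆ x.1
          · rw [if_pos hzx, if_pos ⟨hu, hzx⟩, one_mul]
          · rw [if_neg hzx, if_neg (fun h => hzx h.2), zero_mul]
        · rw [if_neg (fun h => hu h.1)]
          exact Finset.sum_eq_zero fun y _ => if_neg (fun h => hu h.2.2)
    _ = wq u.1 * ∑ z ∈ G.filter (fun z => u.1 ⊆ z ∧ z ⊆ x.1), wq z := by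
        rw [Finset.mul_sum, Finset.sum_filter]
    _ = (1 : Matrix G G ℚ) x u := by
        by_cases hux : u.1 ⊆ x.1
        · have hfilt : G.filter (fun z => u.1 ⊆ z ∧ z ⊆ x.1)
              = x.1.powerset.filter (fun z => u.1 ⊆ z) := by
            ext z
            simp only [Finset.mem_filter, Finset.mem_powerset]
            constructor
            · rintro ⟨_, h1, h2⟩; exact ⟨h2, h1⟩
            · rintro ⟨h2, h1⟩
              exact ⟨hG.2 x.1 x.2 z ((hG.1 u.1 u.2).mono h1) h2, h1, h2⟩
          rw [hfilt, between_sum u.1 x.1 (hG.1 u.1 u.2) hux]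
          by_cases hxu : x.1 = u.1
          · have hx : x = u := Subtype.ext hxu
            subst hx
            simp [Matrix.one_apply, wq_sq]
          · rw [if_neg hxu, mul_zero]
            exact (Matrix.one_apply_ne (fun h => hxu (congrArg Subtype.val h))).symm
        · have hempty : G.filter (fun z => u.1 ⊆ z ∧ z ⊆ x.1) = ∅ := by
            apply Finset.eq_empty_of_forall_notMem
            intro z hz
            rcases Finset.mem_filter.mp hz with ⟨_, h1, h2⟩
            exact hux (h1.trans h2)
          rw [hempty, Finset.sum_empty, mul_zero]
          exact (Matrix.one_apply_ne (fun h => hux (by rw [congrArg Subtype.val h]))).symm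

/-- Potential is curvature: for every simplex x, the total potential
V(x) = ∑_y g(x,y) equals the sphere curvature ω(x)·g(x,x). -/
theorem potential_is_curvature (G : Finset (Finset α)) (hG : IsComplex G)
    (x : G) :
    ∑ y : G, (connL G)⁻¹ x y = (omegaS x.1 : ℚ) * (connL G)⁻¹ x x := by
  have hinv : (connL G)⁻¹ = gmat G := Matrix.inv_eq_right_inv (connL_mul_gmat G hG)
  rw [hinv]
  have homega : ((omegaS x.1 : ℤ) : ℚ) = wq x.1 := by
    unfold omegaS wq; push_cast; ring
  have hfull : ∀ z ∈ G, ∑ y ∈ G.filter (fun y => y ⊆ z), wq y = 1 := by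
    intro z hz
    have hcong : G.filter (fun y => y ⊆ z)
        = G.filter (fun y => y ⊆ z ∧ (y ∩ z).Nonempty) := by
      ext y
      simp only [Finset.mem_filter]
      constructor
      · rintro ⟨hyG, hyz⟩
        refine ⟨hyG, hyz, ?_⟩
        rw [Finset.inter_eq_left.mpr hyz]
        exact hG.1 y hyG
      · rintro ⟨hyG, hyz, _⟩; exact ⟨hyG, hyz⟩
    rw [hcong, mySumInner G hG hz z, if_pos (Finset.Subset.refl z)]
  have hrow : ∑ y : G, gmat G x y
      = wq x.1 * ∑ z ∈ G.filter (fun z => x.1 ⊆ z), wq z := by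
    calc ∑ y : G, gmat G x y
        = ∑ y ∈ G, (wq x.1 * wq y *
            ∑ z ∈ G.filter (fun z => x.1 ⊆ z ∧ y ⊆ z), wq z) :=
          Finset.sum_coe_sort G (fun y => wq x.1 * wq y *
            ∑ z ∈ G.filter (fun z => x.1 ⊆ z ∧ y ⊆ z), wq z)
      _ = ∑ y ∈ G, ∑ z ∈ G,
            (if x.1 ⊆ z ∧ y ⊆ z then wq x.1 * wq y * wq z else 0) := by
          refine Finset.sum_congr rfl fun y _ => ?_
          rw [Finset.sum_filter, Finset.mul_sum]
          refine Finset.sum_congr rfl fun z _ => ?_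
          by_cases h : x.1 ⊆ z ∧ y ⊆ z
          · rw [if_pos h, if_pos h]
          · rw [if_neg h, if_neg h, mul_zero]
      _ = ∑ z ∈ G, ∑ y ∈ G,
            (if x.1 ⊆ z ∧ y ⊆ z then wq x.1 * wq y * wq z else 0) := Finset.sum_comm
      _ = ∑ z ∈ G, (if x.1 ⊆ z then wq x.1 * wq z else 0) := by
          refine Finset.sum_congr rfl fun z hz => ?_
          by_cases hxz : x.1 ⊆ z
          · have hterm : ∀ y ∈ G,
                (if x.1 ⊆ z ∧ y ⊆ z then wq x.1 * wq y * wq z else 0)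
                = (if y ⊆ z then wq y else 0) * (wq x.1 * wq z) := by
              intro y _
              by_cases h : y ⊆ z
              · rw [if_pos ⟨hxz, h⟩, if_pos h]; ring
              · rw [if_neg (fun hh => h hh.2), if_neg h, zero_mul]
            rw [Finset.sum_congr rfl hterm, ← Finset.sum_mul, ← Finset.sum_filter,
              hfull z hz, one_mul, if_pos hxz]
          · rw [if_neg hxz]
            exact Finset.sum_eq_zero fun y _ => if_neg (fun h => hxz h.1)
      _ = wq x.1 * ∑ z ∈ G.filter (fun z => x.1 ⊆ z), wq z := by
          rw [Finset.mul_sum, Finset.sum_filter]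
  have hg : gmat G x x = ∑ z ∈ G.filter (fun z => x.1 ⊆ z), wq z := by
    unfold gmat
    have hfilt : G.filter (fun z => x.1 ⊆ z ∧ x.1 ⊆ z) = G.filter (fun z => x.1 ⊆ z) := by
      ext z; simp [and_self]
    rw [hfilt, wq_sq, one_mul]
  rw [hrow, homega, hg]
end
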